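/- For every m ∈ ℤ_{>0}, there is a bijection between the set of Schröder paths of length m and the set of LLT graphs G on vertex set [m] with no type II edges such that: (i) the subgraph of type I edges is a disjoint union of directed paths whose edges (i,j) satisfy i < j, and which arises from a Schröder path's diagonal steps, and (ii) double edges (i,j) with i < j are exactly the pairs of boxes strictly below the path and above the diagonal. More concretely: the map sending a Schröder path P to the graph G(P) with (i,j) ∈ E_1(G(P)) iff P has a diagonal step in box (i,j), and (i,j) ∈ E_d(G(P)) iff box (i,j) with i < j lies strictly under P, is injective. -/
import Mathlib


open scoped Classical

noncomputable section

/-- A lattice-path step: north `(0,1)`, east `(1,0)`, or diagonal `(1,1)`. -/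
inductive Step : Type
  | n : Step
  | e : Step
  | d : Step
deriving DecidableEq

/-- The endpoint of the lattice path given by a list of steps, starting at `(0,0)`. -/
def pathPos (P : List Step) : ℕ × ℕ :=
  (P.count Step.e + P.count Step.d, P.count Step.n + P.count Step.d)

/-- `P` is a Schröder path of length `m`: it runs from `(0,0)` to `(m,m)`, never
falls below the main diagonal, and has no diagonal step starting on the diagonal. -/
def IsSchroder (m : ℕ) (P : List Step) : Prop :=
  pathPos P = (m, m) ∧
  (∀ k : ℕ, (pathPos (P.take k)).1 ≤ (pathPos (P.take k)).2) ∧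
  (∀ k : ℕ, P[k]? = some Step.d → (pathPos (P.take k)).1 < (pathPos (P.take k)).2)

/-- `P` has a diagonal step in the box `(i,j)` (the unit box with top-right
vertex `(i,j)`), i.e. some prefix of `P` ends at `(i-1, j-1)` and is followed by a
diagonal step. -/
def HasDiag (P : List Step) (i j : ℕ) : Prop :=
  ∃ k : ℕ, P[k]? = some Step.d ∧ pathPos (P.take k) = (i - 1, j - 1)

/-- The box `(i,j)` lies (strictly) under the path `P`: some prefix of `P` ends at a
point with abscissa `i-1` and ordinate at least `j`. -/
def UnderPath (P : List Step) (i j : ℕ) : Prop :=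
  ∃ k : ℕ, (pathPos (P.take k)).1 = i - 1 ∧ j ≤ (pathPos (P.take k)).2

/- ### Auxiliary development -/

def dX : Step → ℕ | .n => 0 | .e => 1 | .d => 1
def dY : Step → ℕ | .n => 1 | .e => 0 | .d => 1

lemma pathPos_nil : pathPos [] = (0, 0) := rfl

lemma pathPos_cons (s : Step) (t : List Step) :
    pathPos (s :: t) = (dX s + (pathPos t).1, dY s + (pathPos t).2) := by
  cases s <;> simp [pathPos, dX, dY, List.count_cons] <;> omega

/-- A path is "good" if it runs from `(x0,y0)` to `(m,m)`, staying weakly above the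
diagonal with diagonal steps strictly above. -/
def GoodF (m x0 y0 : ℕ) (P : List Step) : Prop :=
  x0 + (pathPos P).1 = m ∧ y0 + (pathPos P).2 = m ∧
  (∀ k : ℕ, x0 + (pathPos (P.take k)).1 ≤ y0 + (pathPos (P.take k)).2) ∧
  (∀ k : ℕ, P[k]? = some Step.d → x0 + (pathPos (P.take k)).1 < y0 + (pathPos (P.take k)).2)

def DiagF (x0 y0 : ℕ) (P : List Step) (i j : ℕ) : Prop :=
  ∃ k : ℕ, P[k]? = some Step.d ∧ x0 + (pathPos (P.take k)).1 + 1 = i ∧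
    y0 + (pathPos (P.take k)).2 + 1 = j

def UnderF (x0 y0 : ℕ) (P : List Step) (i j : ℕ) : Prop :=
  ∃ k : ℕ, x0 + (pathPos (P.take k)).1 + 1 = i ∧ j ≤ y0 + (pathPos (P.take k)).2

lemma good_cons {m x0 y0 : ℕ} {s : Step} {t : List Step} (h : GoodF m x0 y0 (s :: t)) :
    GoodF m (x0 + dX s) (y0 + dY s) t := by
  obtain ⟨h1, h2, h3, h4⟩ := h
  rw [pathPos_cons] at h1 h2
  refine ⟨by omega, by omega, ?_, ?_⟩
  · intro k
    have := h3 (k + 1)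
    rw [List.take_succ_cons, pathPos_cons] at this
    omega
  · intro k hk
    have := h4 (k + 1) (by simpa using hk)
    rw [List.take_succ_cons, pathPos_cons] at this
    omega

lemma diag_cons {x0 y0 : ℕ} {s : Step} {t : List Step} {i j : ℕ} :
    DiagF x0 y0 (s :: t) i j ↔
      (s = Step.d ∧ i = x0 + 1 ∧ j = y0 + 1) ∨ DiagF (x0 + dX s) (y0 + dY s) t i j := by
  constructor
  · rintro ⟨k, hk, hi, hj⟩
    cases k with
    | zero =>
      left
      simp only [List.getElem?_cons_zero, Option.some.injEq] at hk
      simp only [List.take_zero, pathPos_nil] at hi hj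
      exact ⟨hk, by omega, by omega⟩
    | succ k =>
      right
      rw [List.take_succ_cons, pathPos_cons] at hi hj
      exact ⟨k, by simpa using hk, by omega, by omega⟩
  · rintro (⟨hs, hi, hj⟩ | ⟨k, hk, hi, hj⟩)
    · subst hs
      refine ⟨0, by simp, ?_, ?_⟩ <;> simp [pathPos_nil] <;> omega
    · refine ⟨k + 1, by simpa using hk, ?_, ?_⟩ <;>
        rw [List.take_succ_cons, pathPos_cons] <;> omega

lemma under_cons {x0 y0 : ℕ} {s : Step} {t : List Step} {i j : ℕ} :
    UnderF x0 y0 (s :: t) i j ↔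
      (i = x0 + 1 ∧ j ≤ y0) ∨ UnderF (x0 + dX s) (y0 + dY s) t i j := by
  constructor
  · rintro ⟨k, hi, hj⟩
    cases k with
    | zero =>
      left
      simp only [List.take_zero, pathPos_nil] at hi hj
      exact ⟨by omega, by omega⟩
    | succ k =>
      right
      rw [List.take_succ_cons, pathPos_cons] at hi hj
      exact ⟨k, by omega, by omega⟩
  · rintro (⟨hi, hj⟩ | ⟨k, hi, hj⟩)
    · refine ⟨0, ?_, ?_⟩ <;> simp [pathPos_nil] <;> omega
    · refine ⟨k + 1, ?_, ?_⟩ <;> rw [List.take_succ_cons, pathPos_cons] <;> omega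

lemma diag_head {x0 y0 : ℕ} {s : Step} {t : List Step} :
    DiagF x0 y0 (s :: t) (x0 + 1) (y0 + 1) ↔ s = Step.d := by
  constructor
  · rintro ⟨k, hk, hi, hj⟩
    cases k with
    | zero => simpa using hk
    | succ k =>
      rw [List.take_succ_cons, pathPos_cons] at hi hj
      cases s with
      | n => simp only [dY] at hj; omega
      | e => simp only [dX] at hi; omega
      | d => rfl
  · rintro rfl
    refine ⟨0, by simp, ?_, ?_⟩ <;> simp [pathPos_nil]

lemma under_head {x0 y0 : ℕ} {s : Step} {t : List Step} :
    UnderF x0 y0 (s :: t) (x0 + 1) (y0 + 1) ↔ s = Step.n := by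
  constructor
  · rintro ⟨k, hi, hj⟩
    cases k with
    | zero => simp [pathPos_nil] at hj
    | succ k =>
      rw [List.take_succ_cons, pathPos_cons] at hi hj
      cases s with
      | n => rfl
      | e => simp only [dX] at hi; omega
      | d => simp only [dX] at hi; omega
  · rintro rfl
    refine ⟨1, ?_, ?_⟩ <;> simp [List.take_succ_cons, pathPos_cons, pathPos_nil, dX, dY]

lemma eq_nil_of_pathPos {L : List Step} (h1 : (pathPos L).1 = 0) (h2 : (pathPos L).2 = 0) :
    L = [] := by
  cases L with
  | nil => rfl
  | cons s t =>
    rw [pathPos_cons] at h1 h2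
    cases s <;> simp [dX, dY] at h1 h2

lemma gen (m : ℕ) : ∀ (P P' : List Step) (x0 y0 : ℕ),
    GoodF m x0 y0 P → GoodF m x0 y0 P' →
    (∀ i j : ℕ, DiagF x0 y0 P i j ↔ DiagF x0 y0 P' i j) →
    (∀ i j : ℕ, i < j → (UnderF x0 y0 P i j ↔ UnderF x0 y0 P' i j)) →
    P = P' := by
  intro P
  induction P with
  | nil =>
    intro P' x0 y0 hP hP' _ _
    obtain ⟨h1, h2, _, _⟩ := hP
    rw [pathPos_nil] at h1 h2
    obtain ⟨g1, g2, _, _⟩ := hP'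
    exact (eq_nil_of_pathPos (by omega) (by omega)).symm
  | cons s t ih =>
    intro P' x0 y0 hP hP' hdiag hunder
    -- P' is nonempty
    have hsum : 1 ≤ (pathPos (s :: t)).1 + (pathPos (s :: t)).2 := by
      rw [pathPos_cons]; cases s <;> simp only [dX, dY] <;> omega
    have hne' : P' ≠ [] := by
      intro h
      subst h
      obtain ⟨h1, h2, _, _⟩ := hP
      obtain ⟨g1, g2, _, _⟩ := hP'
      rw [pathPos_nil] at g1 g2
      omega
    obtain ⟨s', t', rfl⟩ : ∃ s' t', P' = s' :: t' := by
      cases P' with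
      | nil => exact absurd rfl hne'
      | cons a b => exact ⟨a, b, rfl⟩
    have hx0y0 : x0 ≤ y0 := by simpa [pathPos_nil] using hP.2.2.1 0
    -- heads are equal
    have hss : s = s' := by
      by_cases hxm : x0 = m
      · -- both paths have no east/diagonal steps, so heads are `n`
        have h1 := hP.1
        have g1 := hP'.1
        rw [pathPos_cons] at h1 g1
        cases s <;> cases s' <;> simp [dX] at h1 g1 ⊢ <;> omega
      · rcases eq_or_lt_of_le hx0y0 with heq | hlt
        · -- on the diagonal: both heads forced to be `n`
          subst heq
          have forced : ∀ (u : Step) (v : List Step), GoodF m x0 x0 (u :: v) → u = Step.n := by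
            intro u v hu
            cases u with
            | n => rfl
            | e =>
              have := hu.2.2.1 1
              rw [show (Step.e :: v).take 1 = [Step.e] from rfl] at this
              simp [pathPos, List.count_cons] at this
            | d =>
              have := hu.2.2.2 0 (by simp)
              simp [pathPos_nil] at this
          rw [forced s t hP, forced s' t' hP']
        · -- strictly above the diagonal: use the box (x0+1, y0+1)
          have hU := hunder (x0 + 1) (y0 + 1) (by omega)
          rw [under_head, under_head] at hU
          have hD := hdiag (x0 + 1) (y0 + 1)
          rw [diag_head, diag_head] at hD
          cases s <;> cases s' <;> simp_all
    subst hss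
    -- transfer hypotheses to the tails and use the induction hypothesis
    have gP := good_cons hP
    have gP' := good_cons hP'
    have hdiag' : ∀ i j : ℕ, DiagF (x0 + dX s) (y0 + dY s) t i j ↔
        DiagF (x0 + dX s) (y0 + dY s) t' i j := by
      intro i j
      have h := hdiag i j
      rw [diag_cons, diag_cons] at h
      by_cases hA : s = Step.d ∧ i = x0 + 1 ∧ j = y0 + 1
      · obtain ⟨hs, hi, hj⟩ := hA
        subst hs hi hj
        constructor <;> rintro ⟨k, -, hk1, -⟩ <;> simp [dX] at hk1 <;> omega
      · tauto
    have hunder' : ∀ i j : ℕ, i < j → (UnderF (x0 + dX s) (y0 + dY s) t i j ↔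
        UnderF (x0 + dX s) (y0 + dY s) t' i j) := by
      intro i j hij
      have h := hunder i j hij
      rw [under_cons, under_cons] at h
      cases s with
      | n =>
        have hAB : ∀ (v : List Step), (i = x0 + 1 ∧ j ≤ y0) →
            UnderF (x0 + dX Step.n) (y0 + dY Step.n) v i j := by
          rintro v ⟨hi, hj⟩
          exact ⟨0, by simp [pathPos_nil, dX]; omega, by simp [pathPos_nil, dY]; omega⟩
        have h1 := hAB t
        have h2 := hAB t'
        tauto
      | e =>
        by_cases hi : i = x0 + 1
        · subst hi
          constructor <;> rintro ⟨k, hk1, -⟩ <;> simp [dX] at hk1 <;> omega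
        · have hA : ¬(i = x0 + 1 ∧ j ≤ y0) := by tauto
          tauto
      | d =>
        by_cases hi : i = x0 + 1
        · subst hi
          constructor <;> rintro ⟨k, hk1, -⟩ <;> simp [dX] at hk1 <;> omega
        · have hA : ¬(i = x0 + 1 ∧ j ≤ y0) := by tauto
          tauto
    rw [ih t' (x0 + dX s) (y0 + dY s) gP gP' hdiag' hunder']

lemma hasDiag_iff {P : List Step} {i j : ℕ} (hi : 1 ≤ i) (hj : 1 ≤ j) :
    HasDiag P i j ↔ DiagF 0 0 P i j := by
  constructor
  · rintro ⟨k, hk, hp⟩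
    have h1 : (pathPos (P.take k)).1 = i - 1 := by rw [hp]
    have h2 : (pathPos (P.take k)).2 = j - 1 := by rw [hp]
    exact ⟨k, hk, by omega, by omega⟩
  · rintro ⟨k, hk, h1, h2⟩
    refine ⟨k, hk, Prod.ext ?_ ?_⟩ <;> simp <;> omega

lemma underPath_iff {P : List Step} {i j : ℕ} (hi : 1 ≤ i) :
    UnderPath P i j ↔ UnderF 0 0 P i j := by
  constructor
  · rintro ⟨k, h1, h2⟩
    exact ⟨k, by omega, by omega⟩
  · rintro ⟨k, h1, h2⟩
    exact ⟨k, by omega, by omega⟩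

/-- The map `P ↦ G(P)` from Schröder paths of length `m` to LLT graphs on `[m]`
— where `(i,j)` is a type I edge iff `P` has a diagonal step in box `(i,j)`, and
`(i,j)` with `i < j` is a double edge iff box `(i,j)` lies strictly under `P` —
is injective: two Schröder paths of length `m` with the same diagonal-step boxes
and the same boxes `(i,j)`, `i < j`, strictly under the path are equal. -/
theorem schroder_to_LLTGraph_injective (m : ℕ) (P P' : List Step)
    (hP : IsSchroder m P) (hP' : IsSchroder m P')
    (hdiag : ∀ i j : ℕ, 1 ≤ i → 1 ≤ j → (HasDiag P i j ↔ HasDiag P' i j))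
    (hunder : ∀ i j : ℕ, 1 ≤ i → i < j → (UnderPath P i j ↔ UnderPath P' i j)) :
    P = P' := by
  obtain ⟨hP1, hP2, hP3⟩ := hP
  obtain ⟨hP'1, hP'2, hP'3⟩ := hP'
  have gP : GoodF m 0 0 P :=
    ⟨by simp [hP1], by simp [hP1], fun k => by simpa using hP2 k,
      fun k hk => by simpa using hP3 k hk⟩
  have gP' : GoodF m 0 0 P' :=
    ⟨by simp [hP'1], by simp [hP'1], fun k => by simpa using hP'2 k,
      fun k hk => by simpa using hP'3 k hk⟩
  have hd : ∀ i j : ℕ, DiagF 0 0 P i j ↔ DiagF 0 0 P' i j := by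
    intro i j
    rcases Nat.eq_zero_or_pos i with hi | hi
    · subst hi
      constructor <;> rintro ⟨k, -, h, -⟩ <;> omega
    rcases Nat.eq_zero_or_pos j with hj | hj
    · subst hj
      constructor <;> rintro ⟨k, -, -, h⟩ <;> omega
    rw [← hasDiag_iff hi hj, ← hasDiag_iff hi hj]
    exact hdiag i j hi hj
  have hu : ∀ i j : ℕ, i < j → (UnderF 0 0 P i j ↔ UnderF 0 0 P' i j) := by
    intro i j hij
    rcases Nat.eq_zero_or_pos i with hi | hi
    · subst hi
      constructor <;> rintro ⟨k, h, -⟩ <;> omega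
    rw [← underPath_iff hi, ← underPath_iff hi]
    exact hunder i j hi hij
  exact gen m P P' 0 0 gP gP' hd hu
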